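/- arXiv:2102.09730 — 4 statements merged into one kernel-verified Lean document; each statement's English description precedes it below -/
import Mathlib

section
/- Let α > 0 be a real number, let a, b be natural numbers with α·b ≤ a, and let x, y be integers with a + x ≥ 0 and a + b + x + y ≥ 0. Then binom(a+b+x+y, a+x) ≤ ((α+1)^{x+y}/α^x) · ((α+1)·e/α)^a, where (α+1)^{x+y} and α^x are integer powers of positive reals and the binomial coefficient is the usual one on the corresponding natural numbers. -/
/-!
By the binomial theorem, `C(n, k) α^k ≤ (α + 1)^n`. With `n = a + b + x + y` and `k = a + x` this
gives the bound with `(α + 1)^b` in place of `e^a`, and `(α + 1)^b ≤ e^{αb} ≤ e^a`.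
-/

open Real

theorem Nat.choose_mul_pow_le_add_one_pow {R : Type*} [CommSemiring R] [PartialOrder R]
    [IsOrderedRing R] {t : R} (ht : 0 ≤ t) (n k : ℕ) :
    (n.choose k : R) * t ^ k ≤ (t + 1) ^ n := by
  rcases le_or_gt k n with hkn | hnk
  · rw [add_pow, mul_comm]
    simp only [one_pow, mul_one]
    exact Finset.single_le_sum (f := fun i => t ^ i * (n.choose i : R))
      (fun i _ => mul_nonneg (pow_nonneg ht i) (n.choose i).cast_nonneg)
      (Finset.mem_range_succ_iff.2 hkn)
  · simpa [Nat.choose_eq_zero_of_lt hnk] using pow_nonneg (add_nonneg ht zero_le_one) n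

theorem Real.add_one_pow_le_exp_mul {α : ℝ} (hα : -1 ≤ α) (n : ℕ) :
    (α + 1) ^ n ≤ exp (α * n) := by
  rw [mul_comm, exp_nat_mul]
  exact pow_le_pow_left₀ (by linarith) (add_one_le_exp α) n

/-- **Sawin, Lemma 7.1 (`binomial-bound`)**: for `α > 0`, naturals `a, b` with `α·b ≤ a`,
and integers `x, y` (with the entries of the binomial coefficient nonnegative),
`C(a+b+x+y, a+x) ≤ (α+1)^{x+y}/α^x · ((α+1)e/α)^a`. -/
theorem binomial_exponential_bound
    (α : ℝ) (hα : 0 < α) (a b : ℕ) (hab : α * (b : ℝ) ≤ (a : ℝ))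
    (x y : ℤ) (hx : 0 ≤ (a : ℤ) + x) (hxy : 0 ≤ (a : ℤ) + (b : ℤ) + x + y) :
    (Nat.choose ((a : ℤ) + (b : ℤ) + x + y).toNat ((a : ℤ) + x).toNat : ℝ) ≤
      (α + 1) ^ (x + y) / α ^ x * ((α + 1) * Real.exp 1 / α) ^ a := by
  set n := ((a : ℤ) + (b : ℤ) + x + y).toNat
  set k := ((a : ℤ) + x).toNat
  have hn : (n : ℤ) = (x + y) + a + b := by rw [Int.toNat_of_nonneg hxy]; ring
  have hk : (k : ℤ) = x + a := by rw [Int.toNat_of_nonneg hx]; ring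
  have hb : (α + 1) ^ b ≤ exp 1 ^ a := by
    calc (α + 1) ^ b ≤ exp (α * b) := add_one_pow_le_exp_mul (by linarith) b
      _ ≤ exp a := exp_le_exp.2 hab
      _ = exp 1 ^ a := by rw [← exp_nat_mul, mul_one]
  calc (n.choose k : ℝ) ≤ (α + 1) ^ n / α ^ k :=
        (le_div_iff₀ (by positivity)).2 (Nat.choose_mul_pow_le_add_one_pow hα.le n k)
    _ = (α + 1) ^ (x + y) / α ^ x * ((α + 1) ^ a * (α + 1) ^ b / α ^ a) := by
        rw [← zpow_natCast, ← zpow_natCast α, hn, hk, zpow_add₀ (by positivity),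
          zpow_add₀ (by positivity), zpow_add₀ hα.ne', zpow_natCast, zpow_natCast, zpow_natCast]
        ring
    _ ≤ (α + 1) ^ (x + y) / α ^ x * ((α + 1) ^ a * exp 1 ^ a / α ^ a) := by gcongr
    _ = (α + 1) ^ (x + y) / α ^ x * ((α + 1) * exp 1 / α) ^ a := by rw [div_pow, mul_pow]
end

section
/- Let H ≥ 0 and 0 ≤ y ≤ 1 be real numbers, and set H̃ = −(1−y)·log(1−y) − y·log(y) + y·H (with the convention that log 0 = 0, so terms of the form 0·log 0 vanish). Then: (i) exp(H̃) ≤ exp(H) + 1; (ii) if y ≤ 1 − e^{1−H} then exp(H̃) ≤ exp(H); (iii) if y ≤ 1 − 4·e^{−H} then exp(H̃) ≤ exp(H) − 1. -/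
/-!
Write `H̃ = h(y) + y H` with `h` the binary entropy. Gibbs' inequality against the distribution
`(eᴴ, 1) / (eᴴ + 1)` gives `H̃ ≤ log (eᴴ + 1)`. For the other two bounds, estimate
`-y log y ≤ 1 - y` and use the hypothesis `e^{c - H} ≤ 1 - y` (with `c = 1`, resp.
`c = log 4`) to bound `-log (1 - y) ≤ H - c`; this gives `H̃ ≤ H - (1 - y)(c - 1)`. For
`c = log 4 > 4/3` the saving `(1 - y)/3` beats the loss `-log (1 - e^{-H})` because
`e^{-H} ≤ (1 - y)/4`.
-/

open Real

lemma mul_log_sub_mul_log_le {a b : ℝ} (ha : 0 ≤ a) (hb : 0 < b) :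
    a * log b - a * log a ≤ b - a := by
  rcases ha.eq_or_lt with rfl | ha
  · simpa using hb.le
  · have h := mul_le_mul_of_nonneg_left (log_le_sub_one_of_pos (div_pos hb ha)) ha.le
    rw [log_div hb.ne' ha.ne', mul_sub_one, mul_div_cancel₀ b ha.ne'] at h
    linarith [mul_sub a (log b) (log a)]

lemma binEntropy_add_mul_add_mul_le_log {y : ℝ} (hy0 : 0 ≤ y) (hy1 : y ≤ 1) (a b : ℝ) :
    binEntropy y + y * a + (1 - y) * b ≤ log (exp a + exp b) := by
  set Z := exp a + exp b
  have hZ : 0 < Z := by positivity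
  have ha := mul_log_sub_mul_log_le hy0 (div_pos (exp_pos a) hZ)
  have hb := mul_log_sub_mul_log_le (sub_nonneg.2 hy1) (div_pos (exp_pos b) hZ)
  rw [log_div (exp_pos a).ne' hZ.ne', log_exp] at ha
  rw [log_div (exp_pos b).ne' hZ.ne', log_exp] at hb
  have hsum : exp a / Z + exp b / Z = 1 := by rw [← add_div, div_self hZ.ne']
  rw [binEntropy_eq_negMulLog_add_negMulLog_one_sub, negMulLog, negMulLog]
  linarith

lemma binEntropy_add_mul_le_sub {y H c : ℝ} (hy : 0 ≤ y) (h : exp (c - H) ≤ 1 - y) :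
    binEntropy y + y * H ≤ H - (1 - y) * (c - 1) := by
  have hy1 : 0 < 1 - y := (exp_pos _).trans_le h
  have hlog : c - H ≤ log (1 - y) := (le_log_iff_exp_le hy1).2 h
  have hy_log := self_sub_one_le_mul_log hy
  rw [binEntropy_eq_negMulLog_add_negMulLog_one_sub, negMulLog, negMulLog]
  linarith [mul_le_mul_of_nonneg_left hlog hy1.le]

lemma four_div_three_le_log_four : (4 : ℝ) / 3 ≤ log 4 := by
  have h : log 4 = 2 * log 2 := by
    rw [show (4 : ℝ) = 2 ^ 2 by norm_num, log_pow, Nat.cast_ofNat]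
  linarith [log_two_gt_d9]

lemma exp_sub_div_three_le_exp_sub_one {H u : ℝ} (hu : 4 * exp (-H) ≤ u) (hu1 : u ≤ 1) :
    exp (H - u / 3) ≤ exp H - 1 := by
  have hu0 : 0 ≤ u := (by positivity : (0 : ℝ) ≤ 4 * exp (-H)).trans hu
  -- `e^{-u/3} ≤ 1 / (1 + u/3) ≤ 1 - u/4` on `[0, 1]`
  have hexp : exp (-(u / 3)) ≤ 1 - u / 4 := by
    rw [exp_neg, inv_le_iff_one_le_mul₀ (exp_pos _)]
    nlinarith [add_one_le_exp (u / 3)]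
  calc exp (H - u / 3) = exp H * exp (-(u / 3)) := by rw [sub_eq_add_neg, exp_add]
    _ ≤ exp H * (1 - exp (-H)) := by gcongr; linarith
    _ = exp H - 1 := by rw [mul_one_sub, ← exp_add, add_neg_cancel, exp_zero]

theorem entropy_increase_bound_general
    (H y : ℝ) (hy0 : 0 ≤ y) (hy1 : y ≤ 1)
    (Ht : ℝ) (hHt : Ht = -(1 - y) * Real.log (1 - y) - y * Real.log y + y * H) :
    Real.exp Ht ≤ Real.exp H + 1 ∧
    (y ≤ 1 - Real.exp (1 - H) → Real.exp Ht ≤ Real.exp H) ∧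
    (y ≤ 1 - 4 * Real.exp (-H) → Real.exp Ht ≤ Real.exp H - 1) := by
  have hHt_eq : Ht = binEntropy y + y * H := by
    rw [hHt, binEntropy_eq_negMulLog_add_negMulLog_one_sub, negMulLog, negMulLog]; ring
  refine ⟨?_, fun h ↦ ?_, fun h ↦ ?_⟩
  · have hgibbs := binEntropy_add_mul_add_mul_le_log hy0 hy1 H 0
    rw [mul_zero, add_zero, exp_zero, ← hHt_eq] at hgibbs
    rw [← exp_log (by positivity : 0 < exp H + 1)]
    exact exp_le_exp.2 hgibbs
  · have hbound := binEntropy_add_mul_le_sub (c := 1) hy0 (by linarith)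
    exact exp_le_exp.2 (by linarith)
  · have h4 : exp (log 4 - H) ≤ 1 - y := by
      rw [exp_sub, exp_log four_pos, div_eq_mul_inv, ← exp_neg]; linarith
    have hbound := binEntropy_add_mul_le_sub hy0 h4
    have hsave : Ht ≤ H - (1 - y) / 3 := by
      linarith [mul_le_mul_of_nonneg_left four_div_three_le_log_four (sub_nonneg.2 hy1)]
    exact (exp_le_exp.2 hsave).trans
      (exp_sub_div_three_le_exp_sub_one (by linarith) (by linarith))

/-- **Sawin, Lemma 8.1 (`entropy-increase-bound`)**: for `H ≥ 0` and `0 ≤ y ≤ 1`, setting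
`H̃ = -(1-y)·log(1-y) - y·log y + y·H` (with `log 0 = 0`), we have
`exp H̃ ≤ exp H + 1`; moreover `exp H̃ ≤ exp H` if `y ≤ 1 - e^{1-H}`, and
`exp H̃ ≤ exp H - 1` if `y ≤ 1 - 4 e^{-H}`. -/
theorem entropy_increase_bound
    (H y : ℝ) (hH : 0 ≤ H) (hy0 : 0 ≤ y) (hy1 : y ≤ 1)
    (Ht : ℝ) (hHt : Ht = -(1 - y) * Real.log (1 - y) - y * Real.log y + y * H) :
    Real.exp Ht ≤ Real.exp H + 1 ∧
    (y ≤ 1 - Real.exp (1 - H) → Real.exp Ht ≤ Real.exp H) ∧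
    (y ≤ 1 - 4 * Real.exp (-H) → Real.exp Ht ≤ Real.exp H - 1) :=
  entropy_increase_bound_general H y hy0 hy1 Ht hHt
end

section
/- For each integer N ≥ 4, let π(N) = (1/((4+e)·e^{4+e})) · N·e^N/(N−4)!. Then for every integer C ≥ 8, Σ_{N=C}^∞ π(N) ≤ (1/((4+e)·e^{4+e})) · C^5·e^C/C!. -/
/-- The stationary distribution `π(N) = N e^N / ((4+e) e^{4+e} (N-4)!)` of the comparison
Markov chain. -/
noncomputable def markovPi (N : ℕ) : ℝ :=
  (1 / ((4 + Real.exp 1) * Real.exp (4 + Real.exp 1)))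
    * ((N : ℝ) * Real.exp N / (Nat.factorial (N - 4) : ℝ))

/-!
With `T N = N⁵ e^N / N!`, each term is dominated by a telescoping difference:
`N e^N / (N-4)! + T (N+1) ≤ T N` for `N ≥ 8`. After dividing by `e^N / N!` this is the
polynomial inequality `N²(N-1)(N-2)(N-3) + e (N+1)⁴ ≤ N⁵`, so the tail sum from `C` is at
most `T C`.
-/

open Real Nat

/-- `max n C` covers the partial sums that stop before `C`. -/
lemma sum_range_ite_le_sub_of_add_le {f g : ℕ → ℝ} {C : ℕ}
    (hstep : ∀ N, C ≤ N → f N + g (N + 1) ≤ g N) (n : ℕ) :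
    ∑ N ∈ Finset.range n, (if C ≤ N then f N else 0) ≤ g C - g (max n C) := by
  induction n with
  | zero => simp
  | succ n ih =>
    rw [Finset.sum_range_succ]
    by_cases h : C ≤ n
    · rw [if_pos h, max_eq_left (h.trans n.le_succ)]
      rw [max_eq_left h] at ih
      linarith [hstep n h]
    · rw [if_neg h, max_eq_right (by omega)]
      rw [max_eq_right (by omega)] at ih
      linarith

lemma tsum_ite_le_of_add_le {f g : ℕ → ℝ} {C : ℕ} (hf : ∀ N, C ≤ N → 0 ≤ f N)
    (hg : ∀ N, 0 ≤ g N) (hstep : ∀ N, C ≤ N → f N + g (N + 1) ≤ g N) :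
    (∑' N, if C ≤ N then f N else 0) ≤ g C := by
  refine Real.tsum_le_of_sum_range_le (fun N => ?_) (fun n => ?_)
  · split_ifs with h
    exacts [hf N h, le_rfl]
  · linarith [sum_range_ite_le_sub_of_add_le hstep n, hg (max n C)]

lemma factorial_eq_factorial_sub_four_mul {N : ℕ} (hN : 4 ≤ N) :
    (N ! : ℝ) = (N - 4)! * (N * (N - 1) * (N - 2) * (N - 3)) := by
  obtain ⟨m, rfl⟩ := Nat.exists_eq_add_of_le' hN
  simp only [Nat.add_sub_cancel, Nat.factorial_succ]
  push_cast
  ring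

/-- Fails at `x = 8` if `e` is replaced by `3`; the bound `e < 2.7182818286` is needed. -/
lemma exp_one_mul_add_one_pow_four_add_le_pow_five {x : ℝ} (hx : 8 ≤ x) :
    x ^ 2 * (x - 1) * (x - 2) * (x - 3) + exp 1 * (x + 1) ^ 4 ≤ x ^ 5 := by
  have he := Real.exp_one_lt_d9
  have hx' : 0 ≤ x - 8 := by linarith
  nlinarith [pow_nonneg hx' 2, pow_nonneg hx' 3, pow_nonneg hx' 4,
    pow_pos (by linarith : (0 : ℝ) < x + 1) 4]

lemma mul_exp_div_factorial_sub_four_add_le {N : ℕ} (hN : 8 ≤ N) :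
    N * exp N / (N - 4)! + ((N + 1 : ℕ) : ℝ) ^ 5 * exp (N + 1 : ℕ) / (N + 1)! ≤
      N ^ 5 * exp N / N ! := by
  have hfac := factorial_eq_factorial_sub_four_mul (by omega : 4 ≤ N)
  have hN' : (8 : ℝ) ≤ N := by exact_mod_cast hN
  calc N * exp N / (N - 4)! + ((N + 1 : ℕ) : ℝ) ^ 5 * exp (N + 1 : ℕ) / (N + 1)!
      = exp N / N ! * (N ^ 2 * (N - 1) * (N - 2) * (N - 3) + exp 1 * (N + 1) ^ 4) := by
        rw [Nat.factorial_succ]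
        push_cast
        rw [exp_add]
        field_simp
        rw [hfac]
        ring
    _ ≤ exp N / N ! * N ^ 5 := by
        gcongr
        exact exp_one_mul_add_one_pow_four_add_le_pow_five hN'
    _ = N ^ 5 * exp N / N ! := by ring

/-- **Sawin, Lemma 8.4 (`summation-bound`)**: for `C ≥ 8`, the tail sum
`Σ_{N ≥ C} π(N)` is at most `C⁵ e^C / ((4+e) e^{4+e} C!)`. -/
theorem markovPi_tail_bound (C : ℕ) (hC : 8 ≤ C) :
    (∑' N : ℕ, if C ≤ N then markovPi N else 0) ≤
      (1 / ((4 + Real.exp 1) * Real.exp (4 + Real.exp 1)))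
        * ((C : ℝ) ^ 5 * Real.exp C / (Nat.factorial C : ℝ)) := by
  set c := 1 / ((4 + exp 1) * exp (4 + exp 1))
  have hc : 0 ≤ c := by positivity
  refine tsum_ite_le_of_add_le (g := fun N => c * ((N : ℝ) ^ 5 * exp N / N !))
    (fun N _ => by unfold markovPi; positivity) (fun N => by positivity) (fun N hN => ?_)
  rw [markovPi, ← mul_add]
  exact mul_le_mul_of_nonneg_left (mul_exp_div_factorial_sub_four_add_le (hC.trans hN)) hc
end

section
/- Let s be a nonempty finite index set, let (n_i)_{i∈s} be positive integers, and set d = Σ_{i∈s} n_i. Then (card s)! · (Π_{i∈s} n_i) · (Π_{i∈s} n_i!) ≤ (max_{i∈s} n_i) · d!; equivalently, (card s)! · (Π_{i∈s} n_i)/(max_{i∈s} n_i) ≤ d!/(Π_{i∈s} n_i!). -/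
/-!
Induct on `s`, adding the index `a` with the smallest `n a = m` to a nonempty set `t` with
`c` elements and sum `D`. Minimality gives `c * m ≤ D`, and the induction step then needs
`(c + 1) * m ≤ (D + m).choose m`, which holds because `(D + m).choose m ≥ D + m` once
`D, m ≥ 1`.
-/

open Nat Finset

theorem add_le_add_choose {d m : ℕ} (hd : 0 < d) (hm : 0 < m) : d + m ≤ (d + m).choose m := by
  induction m, hm using Nat.le_induction with
  | base => simp
  | succ m hm ih =>
    have hpos : 0 < (d + m).choose (m + 1) := choose_pos (by omega)
    rw [← Nat.add_assoc, choose_succ_succ']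
    omega

theorem succ_mul_le_add_choose {c m d : ℕ} (hc : 0 < c) (h : c * m ≤ d) :
    (c + 1) * m ≤ (d + m).choose m := by
  rcases Nat.eq_zero_or_pos m with rfl | hm
  · simp
  have hd : 0 < d := lt_of_lt_of_le (Nat.mul_pos hc hm) h
  calc (c + 1) * m = c * m + m := Nat.succ_mul c m
    _ ≤ d + m := by omega
    _ ≤ (d + m).choose m := add_le_add_choose hd hm

theorem succ_mul_mul_factorial_mul_factorial_le {c m d : ℕ} (hc : 0 < c) (h : c * m ≤ d) :
    (c + 1) * m * m ! * d ! ≤ (d + m)! :=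
  calc (c + 1) * m * m ! * d ! = (c + 1) * m * d ! * m ! := by ring
    _ ≤ (d + m).choose m * d ! * m ! := by gcongr; exact succ_mul_le_add_choose hc h
    _ = (d + m)! := add_choose_mul_factorial_mul_factorial d m

theorem factorial_partition_bound_general {ι : Type*} (s : Finset ι) (hs : s.Nonempty)
    (n : ι → ℕ) :
    Nat.factorial s.card * (∏ i ∈ s, n i) * (∏ i ∈ s, Nat.factorial (n i)) ≤
      s.sup' hs n * Nat.factorial (∑ i ∈ s, n i) := by
  classical
  induction s using Finset.induction_on_min_value n with
  | empty => exact absurd hs not_nonempty_empty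
  | insert a t ha hmin ih =>
    rcases t.eq_empty_or_nonempty with rfl | ht
    · simp
    have hsum : t.card * n a ≤ ∑ i ∈ t, n i := by
      simpa only [smul_eq_mul] using card_nsmul_le_sum t n (n a) hmin
    have hsup : t.sup' ht n ≤ (insert a t).sup' hs n := by
      rw [sup'_insert (H := ht)]; exact le_sup_right
    rw [card_insert_of_notMem ha, prod_insert ha, prod_insert ha, sum_insert ha, add_comm (n a)]
    calc (t.card + 1)! * (n a * ∏ i ∈ t, n i) * ((n a)! * ∏ i ∈ t, (n i)!)
        = (t.card + 1) * n a * (n a)! * (t.card ! * (∏ i ∈ t, n i) * ∏ i ∈ t, (n i)!) := by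
          rw [factorial_succ]; ring
      _ ≤ (t.card + 1) * n a * (n a)! * (t.sup' ht n * (∑ i ∈ t, n i)!) :=
          Nat.mul_le_mul_left _ (ih ht)
      _ = t.sup' ht n * ((t.card + 1) * n a * (n a)! * (∑ i ∈ t, n i)!) := by ring
      _ ≤ (insert a t).sup' hs n * (∑ i ∈ t, n i + n a)! :=
          Nat.mul_le_mul hsup (succ_mul_mul_factorial_mul_factorial_le (card_pos.mpr ht) hsum)

/-- **Sawin, combinatorial inequality from Lemma 10.7 (`sieve-combinatorial-bound`)**:
for a nonempty finite index set `s` and positive integers `(n_i)_{i ∈ s}` with sum `d`,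
`(card s)! · (Π n_i) · (Π n_i!) ≤ (max_{i ∈ s} n_i) · d!`. -/
theorem factorial_partition_bound {ι : Type*} (s : Finset ι) (hs : s.Nonempty)
    (n : ι → ℕ) (hn : ∀ i ∈ s, 0 < n i) :
    Nat.factorial s.card * (∏ i ∈ s, n i) * (∏ i ∈ s, Nat.factorial (n i)) ≤
      s.sup' hs n * Nat.factorial (∑ i ∈ s, n i) :=
  factorial_partition_bound_general s hs n
end
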